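/- For every n ≥ 4, the cycle C_n is a veto interval graph; moreover it has a representation in which all intervals have the same length and each veto mark is the midpoint of its interval (a midpoint unit veto interval representation). -/
import Mathlib


/-- A veto interval: a closed interval `[l, r]` with a veto mark `v`, `l < v < r`. -/
structure VetoInterval where
  l : ℝ
  v : ℝ
  r : ℝ
  hlv : l < v
  hvr : v < r

/-- Two veto intervals are adjacent iff they intersect and neither contains
the veto mark of the other. -/
def VIAdj (a b : VetoInterval) : Prop :=
  (a.v < b.l ∧ b.l < a.r ∧ a.r < b.v) ∨ (b.v < a.l ∧ a.l < b.r ∧ b.r < a.v)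

/-- `G` is a veto interval graph. -/
def IsVIGraph {V : Type*} (G : SimpleGraph V) : Prop :=
  ∃ f : V → VetoInterval, ∀ a b : V, G.Adj a b ↔ VIAdj (f a) (f b)

/-- Position of the midpoint (= veto mark) of the `i`-th interval in our
representation of `C_n`. All intervals have length `16`, and two intervals
are adjacent iff the distance between midpoints lies strictly between `8`
and `16`. -/
def vpos (n i : ℕ) : ℤ :=
  if i = 0 then 3
  else if i < n / 2 then 12 * i
  else if i = n / 2 then (if n % 2 = 0 then 12 * (n / 2) + 3 else 12 * (n / 2))
  else if n % 2 = 1 ∧ i = n / 2 + 1 then 12 * (n / 2) + 9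
  else 12 * ((n : ℤ) - i) + 6

/-- Unit midpoint veto interval centered at `x` with radius `8`. -/
def vmk (x : ℤ) : VetoInterval :=
  ⟨(x : ℝ) - 8, (x : ℝ), (x : ℝ) + 8, by linarith, by linarith⟩

lemma vmk_adj (x y : ℤ) :
    VIAdj (vmk x) (vmk y) ↔
      (8 < y - x ∧ y - x < 16) ∨ (8 < x - y ∧ x - y < 16) := by
  constructor
  · rintro (⟨h1, h2, h3⟩ | ⟨h1, h2, h3⟩)
    · left
      simp only [vmk] at h1 h2 h3
      constructor
      · have : (8 : ℝ) < (y : ℤ) - (x : ℤ) := by linarith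
        exact_mod_cast this
      · have : ((y - x : ℤ) : ℝ) < 16 := by push_cast; linarith
        exact_mod_cast this
    · right
      simp only [vmk] at h1 h2 h3
      constructor
      · have : (8 : ℝ) < (x : ℤ) - (y : ℤ) := by linarith
        exact_mod_cast this
      · have : ((x - y : ℤ) : ℝ) < 16 := by push_cast; linarith
        exact_mod_cast this
  · rintro (⟨h1, h2⟩ | ⟨h1, h2⟩)
    · have h1' : (8 : ℝ) < (y : ℝ) - (x : ℝ) := by exact_mod_cast h1
      have h2' : (y : ℝ) - (x : ℝ) < 16 := by exact_mod_cast h2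
      exact Or.inl ⟨by simp only [vmk]; linarith, by simp only [vmk]; linarith,
        by simp only [vmk]; linarith⟩
    · have h1' : (8 : ℝ) < (x : ℝ) - (y : ℝ) := by exact_mod_cast h1
      have h2' : (x : ℝ) - (y : ℝ) < 16 := by exact_mod_cast h2
      exact Or.inr ⟨by simp only [vmk]; linarith, by simp only [vmk]; linarith,
        by simp only [vmk]; linarith⟩

/-- The key combinatorial lemma: the cycle edge relation matches the
"midpoints at distance strictly between 8 and 16" relation. -/
lemma vpos_key (n i j : ℕ) (hn : 4 ≤ n) (hi : i < n) (hj : j < n) :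
    (i + 1 = j ∨ j + 1 = i ∨ (i = 0 ∧ j + 1 = n) ∨ (j = 0 ∧ i + 1 = n)) ↔
      ((8 < vpos n j - vpos n i ∧ vpos n j - vpos n i < 16) ∨
       (8 < vpos n i - vpos n j ∧ vpos n i - vpos n j < 16)) := by
  unfold vpos
  split_ifs <;> omega

lemma fin_sub_val_eq_one {n : ℕ} (hn : 4 ≤ n) (u v : Fin n) :
    (u - v).val = 1 ↔ (u.val = v.val + 1 ∨ (u.val = 0 ∧ v.val + 1 = n)) := by
  have hu := u.isLt
  have hv := v.isLt
  rw [Fin.sub_def]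
  show (n - v.val + u.val) % n = 1 ↔ _
  rcases le_or_gt v.val u.val with h | h
  · have he : n - v.val + u.val = (u.val - v.val) + n := by omega
    rw [he, Nat.add_mod_right, Nat.mod_eq_of_lt (by omega)]
    omega
  · rw [Nat.mod_eq_of_lt (by omega)]
    omega

lemma cycle_adj_iff {n : ℕ} (hn : 4 ≤ n) (a b : Fin n) :
    (SimpleGraph.cycleGraph n).Adj a b ↔
      ((8 < vpos n b.val - vpos n a.val ∧ vpos n b.val - vpos n a.val < 16) ∨
       (8 < vpos n a.val - vpos n b.val ∧ vpos n a.val - vpos n b.val < 16)) := by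
  rw [SimpleGraph.cycleGraph_adj', fin_sub_val_eq_one hn, fin_sub_val_eq_one hn]
  rw [← vpos_key n a.val b.val hn a.isLt b.isLt]
  tauto

/-- For `n ≥ 4`, the cycle `C_n` is a veto interval graph; moreover it has a
representation in which all intervals have the same length and every veto mark
is the midpoint of its interval. -/
theorem stmt_6 (n : ℕ) (hn : 4 ≤ n) :
    IsVIGraph (SimpleGraph.cycleGraph n) ∧
    ∃ f : Fin n → VetoInterval,
      (∀ a b : Fin n, (SimpleGraph.cycleGraph n).Adj a b ↔ VIAdj (f a) (f b)) ∧
      (∀ a b : Fin n, (f a).r - (f a).l = (f b).r - (f b).l) ∧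
      (∀ a : Fin n, (f a).v = ((f a).l + (f a).r) / 2) := by
  have hf : ∀ a b : Fin n, (SimpleGraph.cycleGraph n).Adj a b ↔
      VIAdj (vmk (vpos n a.val)) (vmk (vpos n b.val)) := by
    intro a b
    rw [vmk_adj]
    exact cycle_adj_iff hn a b
  refine ⟨⟨fun i => vmk (vpos n i.val), hf⟩, fun i => vmk (vpos n i.val), hf, ?_, ?_⟩
  · intro a b
    simp only [vmk]
    ring
  · intro a
    simp only [vmk]
    ring
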